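/- With the Corollary-5 closed-form SINR defined in the context (δ = 0), scale the transmit power as p(N) = E_u/N for a constant E_u > 0, so that x(N) = σ²·N/(τ·E_u). Then, assuming each H_i : ℕ → ℝ is nonnegative and bounded, SINR_k(N) → E_u·M·β·α_k / (∑_{i=1}^{K} (E_u·β·α_i + (α_i/α_k)·(σ²/τ)) + σ²·(1 + σ²/(τ·E_u·β·α_k))) as the number of RIS elements N → ∞ (the '1/N power scaling law' of Corollary 7). -/

import Mathlib

open Filter Topology

/-! Divide numerator and denominator of the SINR by `N`. With `p = E_u/N` every term
`p · T(N)` with `T(N) = (A N² + B N + O(1)) · e₁(N)` becomes `E_u (A + O(1/N)) e₁(N)`, the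
noise term becomes `σ² (β α_k + O(1/N))`, and `e₁(N) → β α_k / (β α_k + s)` with
`s = σ²/(τ E_u)`. Since `c_i (ε_i + 1) = β α_i`, the leading coefficient is `β α_i (β α_k + s)`
for the interference of user `i` and the same expression with `i = k` for `L`, so the limit of
the denominator is a sum over all users. -/

lemma tendsto_linear_div_self (A B : ℝ) :
    Tendsto (fun N : ℕ => (A * N + B) / N) atTop (𝓝 A) := by
  have h := (tendsto_inv_atTop_nhds_zero_nat (𝕜 := ℝ)).const_mul B |>.const_add A
  rw [mul_zero, add_zero] at h
  refine h.congr' ?_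
  filter_upwards [eventually_ne_atTop 0] with N hN
  field_simp

lemma tendsto_linear_div_linear (A B C D : ℝ) (hC : C ≠ 0) :
    Tendsto (fun N : ℕ => (A * N + B) / (C * N + D)) atTop (𝓝 (A / C)) := by
  refine ((tendsto_linear_div_self A B).div (tendsto_linear_div_self C D) hC).congr' ?_
  filter_upwards [eventually_ne_atTop 0] with N hN
  exact div_div_div_cancel_right₀ (Nat.cast_ne_zero.mpr hN) _ _

lemma tendsto_quadratic_div_sq (A B : ℝ) {g : ℕ → ℝ} (hg : ∃ C, ∀ N, |g N| ≤ C) :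
    Tendsto (fun N : ℕ => (A * N ^ 2 + B * N + g N) / N ^ 2) atTop (𝓝 A) := by
  have hinv_sq : Tendsto (fun N : ℕ => ((N : ℝ)⁻¹) ^ 2) atTop (𝓝 0) := by
    simpa using (tendsto_inv_atTop_nhds_zero_nat (𝕜 := ℝ)).pow 2
  have hrem : Tendsto (fun N : ℕ => ((N : ℝ)⁻¹) ^ 2 * g N) atTop (𝓝 0) := by
    exact hinv_sq.zero_mul_isBoundedUnder_le (isBoundedUnder_of hg)
  have h := (tendsto_linear_div_self A B).add hrem
  rw [add_zero] at h
  refine h.congr' ?_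
  filter_upwards [eventually_ne_atTop 0] with N hN
  field_simp

lemma tendsto_div_mul_quadratic_mul_div {e T g : ℕ → ℝ} {e₀ : ℝ} (E A B : ℝ)
    (he : Tendsto e atTop (𝓝 e₀)) (hg : ∃ C, ∀ N, |g N| ≤ C)
    (hT : ∀ N : ℕ, T N = (A * N ^ 2 + B * N + g N) * e N) :
    Tendsto (fun N : ℕ => E / N * T N / N) atTop (𝓝 (E * A * e₀)) :=
  (((tendsto_quadratic_div_sq A B hg).const_mul E).mul he).congr fun N => by rw [hT]; ring

lemma exists_abs_mul_add_le {h : ℕ → ℝ} (m b : ℝ) (h0 : ∀ N, 0 ≤ h N)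
    (hC : ∃ C, ∀ N, h N ≤ C) : ∃ C, ∀ N, |m * h N + b| ≤ C := by
  obtain ⟨C, hC⟩ := hC
  refine ⟨|m| * C + |b|, fun N => ?_⟩
  calc |m * h N + b| ≤ |m| * h N + |b| := by
        simpa [abs_mul, abs_of_nonneg (h0 N)] using abs_add_le (m * h N) b
    _ ≤ |m| * C + |b| := by gcongr; exact hC N

lemma tendsto_div_of_tendsto_div_natCast {f g : ℕ → ℝ} {a b : ℝ}
    (hf : Tendsto (fun N : ℕ => f N / N) atTop (𝓝 a))
    (hg : Tendsto (fun N : ℕ => g N / N) atTop (𝓝 b)) (hb : b ≠ 0) :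
    Tendsto (fun N => f N / g N) atTop (𝓝 (a / b)) := by
  refine (hf.div hg hb).congr' ?_
  filter_upwards [eventually_ne_atTop 0] with N hN
  exact div_div_div_cancel_right₀ (Nat.cast_ne_zero.mpr hN) _ _

lemma power_scaling_limit_eq {ι : Type*} [Fintype ι] [DecidableEq ι] (α : ι → ℝ) (k : ι)
    (M β σ2 τ Eu s : ℝ) (hα : ∀ i, 0 < α i) (hβ : 0 < β) (hτ : 0 < τ) (hEu : 0 < Eu)
    (hs : s = σ2 / (τ * Eu)) (hs_pos : 0 ≤ s) :
    Eu * (M * (β * α k) ^ 2) * (β * α k / (β * α k + s)) /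
        (Eu * (β * α k * (β * α k + s)) * (β * α k / (β * α k + s))
          + ∑ i ∈ Finset.univ.erase k, Eu * (β * α i * (β * α k + s)) * (β * α k / (β * α k + s))
          + σ2 * (β * α k)) =
      Eu * M * β * α k /
        (∑ i, (Eu * β * α i + α i / α k * (σ2 / τ)) + σ2 * (1 + σ2 / (τ * Eu * β * α k))) := by
  have hαk := hα k
  have hsum_pos : 0 < ∑ i, α i := Finset.sum_pos (fun i _ => hα i) ⟨k, Finset.mem_univ k⟩
  rw [Finset.add_sum_erase _ (fun i => Eu * (β * α i * (β * α k + s)) * (β * α k / (β * α k + s)))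
      (Finset.mem_univ k),
    Finset.sum_congr rfl fun i _ => show Eu * β * α i + α i / α k * (σ2 / τ)
      = (Eu * β + σ2 / (τ * α k)) * α i by field_simp,
    Finset.sum_congr rfl fun i _ => show Eu * (β * α i * (β * α k + s)) * (β * α k / (β * α k + s))
      = Eu * β * (β * α k) * α i by field_simp,
    ← Finset.mul_sum, ← Finset.mul_sum, hs]
  field_simp

theorem stmt10_general (K : ℕ) (M : ℕ)
    (β : ℝ) (hβ : 0 < β)
    (α γ ε : Fin K → ℝ)
    (hα : ∀ i, 0 < α i) (hε : ∀ i, 0 ≤ ε i)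
    (c : Fin K → ℝ) (hc : ∀ i, c i = β * α i / (ε i + 1))
    (k : Fin K) (σ2 τ Eu : ℝ) (hσ : 0 < σ2) (hτ : 0 < τ) (hEu : 0 < Eu)
    (p x : ℕ → ℝ)
    (hp : ∀ N : ℕ, p N = Eu / N)
    (hx : ∀ N : ℕ, x N = σ2 * N / (τ * Eu))
    (H : Fin K → ℕ → ℝ)
    (hHnn : ∀ i N, 0 ≤ H i N)
    (hHbd : ∀ i, ∃ C : ℝ, ∀ N, H i N ≤ C)
    (e1 S E L : ℕ → ℝ) (I : Fin K → ℕ → ℝ) (SINR : ℕ → ℝ)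
    (he1 : ∀ N : ℕ, e1 N = (N * β * α k + γ k) / (N * β * α k + γ k + x N))
    (hS : ∀ N : ℕ, S N = M * (N * β * α k + γ k) ^ 2 * e1 N)
    (hE : ∀ N : ℕ, E N = N * β * α k + γ k)
    (hL : ∀ N : ℕ, L N =
        ((N : ℝ) ^ 2 * c k ^ 2 * (ε k + 1) ^ 2
          + M * N * c k ^ 2 * (2 * ε k + 1)
          + N * c k * (c k * (2 * ε k + 1) + (2 * γ k + x N) * (ε k + 1))
          + γ k * (γ k + x N)) * e1 N)
    (hI : ∀ i, i ≠ k → ∀ N : ℕ, I i N =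
        ((N : ℝ) ^ 2 * c k * c i * (ε k + 1) * (ε i + 1)
          + M * N * c k * c i * (ε k + ε i + 1)
          + M * c k * c i * ε k * ε i * H i N
          + N * ((γ k + x N) * c i * (ε i + 1) + γ i * c k * (ε k + 1))
          + γ i * (γ k + x N)) * e1 N)
    (hSINR : ∀ N : ℕ, SINR N =
        p N * S N / (p N * L N + p N * (∑ i ∈ Finset.univ.erase k, I i N) + σ2 * E N)) :
    Tendsto SINR atTop
      (nhds (Eu * M * β * α k /
        ((∑ i, (Eu * β * α i + α i / α k * (σ2 / τ))) + σ2 * (1 + σ2 / (τ * Eu * β * α k))))) := by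
  obtain ⟨s, hs_def⟩ : ∃ s, s = σ2 / (τ * Eu) := ⟨_, rfl⟩
  have hs : 0 < s := hs_def ▸ by positivity
  have hαk := hα k
  have hxs : ∀ N : ℕ, x N = s * N := fun N => by rw [hx, hs_def]; ring
  have hcε : ∀ i, c i * (ε i + 1) = β * α i := fun i => by
    rw [hc i, div_mul_cancel₀ _ (by linarith [hε i])]
  have he1_lim : Tendsto e1 atTop (𝓝 (β * α k / (β * α k + s))) :=
    (tendsto_linear_div_linear (β * α k) (γ k) (β * α k + s) (γ k) (by positivity)).congr
      fun N => by rw [he1, hxs]; ring_nf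
  have hS_lim := tendsto_div_mul_quadratic_mul_div Eu (M * (β * α k) ^ 2)
    (2 * M * (β * α k) * γ k) he1_lim (T := S) (g := fun _ => M * γ k ^ 2)
    ⟨_, fun _ => le_rfl⟩ fun N => by rw [hS]; ring
  have hL_lim := tendsto_div_mul_quadratic_mul_div Eu (β * α k * (β * α k + s))
    (M * c k ^ 2 * (2 * ε k + 1) + c k ^ 2 * (2 * ε k + 1) + 2 * γ k * (c k * (ε k + 1)) + γ k * s)
    he1_lim (T := L) (g := fun _ => γ k ^ 2) ⟨_, fun _ => le_rfl⟩
    fun N => by rw [hL, hxs, ← hcε k]; ring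
  have hI_lim : ∀ i ∈ Finset.univ.erase k, Tendsto (fun N : ℕ => Eu / N * I i N / N) atTop
      (𝓝 (Eu * (β * α i * (β * α k + s)) * (β * α k / (β * α k + s)))) := fun i hi =>
    tendsto_div_mul_quadratic_mul_div Eu _
      (M * c k * c i * (ε k + ε i + 1) + γ k * (c i * (ε i + 1)) + γ i * (c k * (ε k + 1))
        + γ i * s) he1_lim
      (exists_abs_mul_add_le (M * c k * c i * ε k * ε i) (γ i * γ k) (hHnn i) (hHbd i))
      fun N => by rw [hI i (Finset.ne_of_mem_erase hi), hxs, ← hcε k, ← hcε i]; ring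
  have hE_lim := (tendsto_linear_div_self (β * α k) (γ k)).const_mul σ2
  have hSINR_eq : SINR = fun N => Eu / N * S N /
      (Eu / N * L N + ∑ i ∈ Finset.univ.erase k, Eu / N * I i N + σ2 * E N) :=
    funext fun N => by rw [hSINR, hp, Finset.mul_sum]
  rw [hSINR_eq, ← power_scaling_limit_eq α k M β σ2 τ Eu s hα hβ hτ hEu hs_def hs.le]
  refine tendsto_div_of_tendsto_div_natCast hS_lim ?_ (add_pos_of_nonneg_of_pos (add_nonneg
    (by positivity) (Finset.sum_nonneg fun i _ => by have := hα i; positivity)) (by positivity)).ne'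
  refine ((hL_lim.add (tendsto_finsetSum _ hI_lim)).add hE_lim).congr fun N => ?_
  simp only [hE, add_div, Finset.sum_div]
  ring

/-- Corollary 7 of the paper, the `1/N` power scaling law for δ = 0:
scaling the transmit power as `p(N) = E_u/N`, so `x(N) = σ² N/(τ E_u)`, the
closed-form SINR of user `k` converges as `N → ∞` to
`E_u M β α_k / (∑ᵢ (E_u β α_i + (α_i/α_k)(σ²/τ)) + σ²(1 + σ²/(τ E_u β α_k)))`. -/
theorem stmt10 (K : ℕ) (hK : 1 ≤ K) (M : ℕ) (hM : 1 ≤ M)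
    (β : ℝ) (hβ : 0 < β)
    (α γ ε : Fin K → ℝ)
    (hα : ∀ i, 0 < α i) (hγ : ∀ i, 0 ≤ γ i) (hε : ∀ i, 0 ≤ ε i)
    (c : Fin K → ℝ) (hc : ∀ i, c i = β * α i / (ε i + 1))
    (k : Fin K) (σ2 τ Eu : ℝ) (hσ : 0 < σ2) (hτ : 0 < τ) (hEu : 0 < Eu)
    (p x : ℕ → ℝ)
    (hp : ∀ N : ℕ, p N = Eu / N)
    (hx : ∀ N : ℕ, x N = σ2 * N / (τ * Eu))
    (H : Fin K → ℕ → ℝ)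
    (hHnn : ∀ i N, 0 ≤ H i N)
    (hHbd : ∀ i, ∃ C : ℝ, ∀ N, H i N ≤ C)
    (e1 S E L : ℕ → ℝ) (I : Fin K → ℕ → ℝ) (SINR : ℕ → ℝ)
    (he1 : ∀ N : ℕ, e1 N = (N * β * α k + γ k) / (N * β * α k + γ k + x N))
    (hS : ∀ N : ℕ, S N = M * (N * β * α k + γ k) ^ 2 * e1 N)
    (hE : ∀ N : ℕ, E N = N * β * α k + γ k)
    (hL : ∀ N : ℕ, L N =
        ((N : ℝ) ^ 2 * c k ^ 2 * (ε k + 1) ^ 2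
          + M * N * c k ^ 2 * (2 * ε k + 1)
          + N * c k * (c k * (2 * ε k + 1) + (2 * γ k + x N) * (ε k + 1))
          + γ k * (γ k + x N)) * e1 N)
    (hI : ∀ i, i ≠ k → ∀ N : ℕ, I i N =
        ((N : ℝ) ^ 2 * c k * c i * (ε k + 1) * (ε i + 1)
          + M * N * c k * c i * (ε k + ε i + 1)
          + M * c k * c i * ε k * ε i * H i N
          + N * ((γ k + x N) * c i * (ε i + 1) + γ i * c k * (ε k + 1))
          + γ i * (γ k + x N)) * e1 N)
    (hSINR : ∀ N : ℕ, SINR N =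
        p N * S N / (p N * L N + p N * (∑ i ∈ Finset.univ.erase k, I i N) + σ2 * E N)) :
    Tendsto SINR atTop
      (nhds (Eu * M * β * α k /
        ((∑ i, (Eu * β * α i + α i / α k * (σ2 / τ))) + σ2 * (1 + σ2 / (τ * Eu * β * α k))))) :=
  stmt10_general K M β hβ α γ ε hα hε c hc k σ2 τ Eu hσ hτ hEu p x hp hx H hHnn hHbd e1 S E L I SINR
    he1 hS hE hL hI hSINR
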